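/- arXiv:1904.12920 — 2 statements merged into one kernel-verified Lean document; each statement's English description precedes it below -/
import Mathlib

section
/- Let m > 2 divide n. The number of non-equivalent 2-reducible (n,m)-piecewise affine permutations of [1,n] is at least φ(n/m)·φ(m)·n²/m², where φ is Euler's totient function. -/
/-- `psi k x` is the representative of `x` mod `k` in `[1, k]`. -/
def psi (k x : ℕ) : ℕ := if x % k = 0 then k else x % k

lemma psi_mem {k : ℕ} (hk : 0 < k) (x : ℕ) : psi k x ∈ Set.Icc 1 k := by
  unfold psi
  have := Nat.mod_lt x hk
  split <;> constructor <;> omega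

lemma psi_mod (k x : ℕ) : psi k x % k = x % k := by
  unfold psi
  split
  · simp [Nat.mod_self]; omega
  · exact Nat.mod_mod_of_dvd x dvd_rfl

lemma psi_eq_iff {k x y : ℕ} : psi k x = psi k y ↔ x % k = y % k := by
  constructor
  · intro h
    have := congrArg (· % k) h
    simpa [psi_mod] using this
  · intro h; unfold psi; rw [h]

lemma psi_eq_self {k x : ℕ} (h1 : 1 ≤ x) (h2 : x ≤ k) : psi k x = x := by
  unfold psi
  rcases eq_or_lt_of_le h2 with rfl | hlt
  · simp
  · rw [Nat.mod_eq_of_lt hlt, if_neg (by omega)]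

lemma psi_eq_top_iff {k x : ℕ} (hk : 0 < k) : psi k x = k ↔ x % k = 0 := by
  unfold psi
  have := Nat.mod_lt x hk
  split <;> omega

lemma mod_inj {k x y : ℕ} (hx1 : 1 ≤ x) (hx2 : x ≤ k) (hy1 : 1 ≤ y) (hy2 : y ≤ k)
    (h : x % k = y % k) : x = y := by
  rcases eq_or_lt_of_le hx2 with rfl | hx
  · rcases eq_or_lt_of_le hy2 with rfl | hy
    · rfl
    · rw [Nat.mod_self, Nat.mod_eq_of_lt hy] at h; omega
  · rcases eq_or_lt_of_le hy2 with rfl | hy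
    · rw [Nat.mod_self, Nat.mod_eq_of_lt hx] at h; omega
    · rwa [Nat.mod_eq_of_lt hx, Nat.mod_eq_of_lt hy] at h

/-- `π` is an `(n,m)`-piecewise affine permutation of `[1,n]` with parameters
`(a, b, c)`: it permutes `[1,n]` (and is the identity elsewhere), the entries of
`a, b` lie in `[1,n]`, the entries of `c` form a permutation of `[1,m]`, and for
`x ∈ [1,n]` with `Ψ_m(x) = c_i` one has `π(x) = Ψ_n(a_i x + b_i)` and
`Ψ_m(π(x)) = c_{i+1}`, indices cyclic modulo `m`. -/
def IsPAP (n m : ℕ) [NeZero m] (a b c : Fin m → ℕ) (π : ℕ → ℕ) : Prop :=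
  Set.BijOn π (Set.Icc 1 n) (Set.Icc 1 n) ∧
  (∀ x : ℕ, x ∉ Set.Icc 1 n → π x = x) ∧
  (∀ i, a i ∈ Set.Icc 1 n) ∧ (∀ i, b i ∈ Set.Icc 1 n) ∧
  (∀ i, c i ∈ Set.Icc 1 m) ∧ Function.Injective c ∧
  ∀ x ∈ Set.Icc 1 n, ∀ i, psi m x = c i →
    π x = psi n (a i * x + b i) ∧ psi m (π x) = c (i + 1)

/-- `π` is a 2-reducible `(n,m)`-p.a.p. with 2-reduced parameters
`(a₀, a, b₀, b)`: it is an `(n,m)`-p.a.p. and on `[1,n]` it is given by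
`π(x) = Ψ_n(a₀x + b₀)` when `m ∣ x` and `π(x) = Ψ_n(ax + b)` otherwise. -/
def IsPAP2 (n m : ℕ) [NeZero m] (a₀ a b₀ b : ℕ) (π : ℕ → ℕ) : Prop :=
  (∃ av bv cv : Fin m → ℕ, IsPAP n m av bv cv π) ∧
  ∀ x ∈ Set.Icc 1 n,
    (m ∣ x → π x = psi n (a₀ * x + b₀)) ∧ (¬ m ∣ x → π x = psi n (a * x + b))


def F (n m a₀ b₀ b : ℕ) : ℕ → ℕ := fun x =>
  if 1 ≤ x ∧ x ≤ n then (if x % m = 0 then psi n (a₀ * x + b₀) else psi n (x + b)) else x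

lemma F_dvd {n m a₀ b₀ b x : ℕ} (h1 : 1 ≤ x) (h2 : x ≤ n) (hx : x % m = 0) :
    F n m a₀ b₀ b x = psi n (a₀ * x + b₀) := by
  unfold F; rw [if_pos (And.intro h1 h2), if_pos hx]

lemma F_ndvd {n m a₀ b₀ b x : ℕ} (h1 : 1 ≤ x) (h2 : x ≤ n) (hx : ¬ x % m = 0) :
    F n m a₀ b₀ b x = psi n (x + b) := by
  unfold F; rw [if_pos (And.intro h1 h2), if_neg hx]

lemma F_out {n m a₀ b₀ b x : ℕ} (h : ¬ (1 ≤ x ∧ x ≤ n)) : F n m a₀ b₀ b x = x := by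
  unfold F; rw [if_neg h]

lemma psi_mod_of_dvd {n m : ℕ} (hmn : m ∣ n) (y : ℕ) : psi n y % m = y % m := by
  calc psi n y % m = psi n y % n % m := (Nat.mod_mod_of_dvd _ hmn).symm
    _ = y % n % m := by rw [psi_mod]
    _ = y % m := Nat.mod_mod_of_dvd _ hmn

lemma key {n m q : ℕ} [NeZero m] (hm : 2 < m) (hq : n = m * q) (hq1 : 1 ≤ q)
    {a₀ b₀ b : ℕ}
    (ha₀1 : 1 ≤ a₀) (ha₀2 : a₀ ≤ q) (ha₀c : Nat.Coprime q a₀)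
    (hb1 : 1 ≤ b) (hb2 : b ≤ n) (hbc : Nat.Coprime m b)
    (hb₀1 : 1 ≤ b₀) (hb₀2 : b₀ ≤ n) (hbb : b₀ % m = b % m) :
    IsPAP2 n m a₀ 1 b₀ b (F n m a₀ b₀ b) := by
  have hm0 : 0 < m := by omega
  have hn0 : 0 < n := by rw [hq]; positivity
  have hnm : m ≤ n := by rw [hq]; exact Nat.le_mul_of_pos_right m hq1
  have hmn : m ∣ n := ⟨q, hq⟩
  -- residue behaviour
  have hres : ∀ x, 1 ≤ x → x ≤ n → F n m a₀ b₀ b x % m = (x + b) % m := by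
    intro x h1 h2
    by_cases hx0 : x % m = 0
    · rw [F_dvd h1 h2 hx0, psi_mod_of_dvd hmn]
      have hax : a₀ * x % m = 0 := by rw [Nat.mul_mod, hx0, mul_zero, Nat.zero_mod]
      rw [Nat.add_mod, hax, zero_add, Nat.mod_mod_of_dvd _ dvd_rfl, hbb,
        Nat.add_mod, hx0, zero_add, Nat.mod_mod_of_dvd _ dvd_rfl]
    · rw [F_ndvd h1 h2 hx0, psi_mod_of_dvd hmn]
  have hmaps : Set.MapsTo (F n m a₀ b₀ b) (Set.Icc 1 n) (Set.Icc 1 n) := by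
    intro x hx
    obtain ⟨h1, h2⟩ := hx
    by_cases hx0 : x % m = 0
    · rw [F_dvd h1 h2 hx0]; exact psi_mem hn0 _
    · rw [F_ndvd h1 h2 hx0]; exact psi_mem hn0 _
  have hinj : Set.InjOn (F n m a₀ b₀ b) (Set.Icc 1 n) := by
    intro x hx y hy hxy
    obtain ⟨hx1, hx2⟩ := hx
    obtain ⟨hy1, hy2⟩ := hy
    have hrm : (x + b) % m = (y + b) % m := by
      rw [← hres x hx1 hx2, ← hres y hy1 hy2, hxy]
    have hxm : x % m = y % m := Nat.ModEq.add_right_cancel' b hrm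
    by_cases hx0 : x % m = 0
    · have hy0 : y % m = 0 := by omega
      rw [F_dvd hx1 hx2 hx0, F_dvd hy1 hy2 hy0] at hxy
      have h1 : (a₀ * x + b₀) % n = (a₀ * y + b₀) % n := psi_eq_iff.mp hxy
      have h2 : a₀ * x ≡ a₀ * y [MOD n] := Nat.ModEq.add_right_cancel' b₀ h1
      obtain ⟨x', rfl⟩ : m ∣ x := Nat.dvd_of_mod_eq_zero hx0
      obtain ⟨y', rfl⟩ : m ∣ y := Nat.dvd_of_mod_eq_zero hy0
      have h3 : m * (a₀ * x') ≡ m * (a₀ * y') [MOD m * q] := by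
        rw [show m * (a₀ * x') = a₀ * (m * x') from by ring,
          show m * (a₀ * y') = a₀ * (m * y') from by ring, ← hq]
        exact h2
      have h4 : a₀ * x' ≡ a₀ * y' [MOD q] :=
        Nat.ModEq.mul_left_cancel' (by omega) h3
      have h5 : x' ≡ y' [MOD q] := Nat.ModEq.cancel_left_of_coprime ha₀c h4
      have hx'1 : 1 ≤ x' := by
        rcases Nat.eq_zero_or_pos x' with rfl | h
        · simp at hx1
        · exact h
      have hy'1 : 1 ≤ y' := by
        rcases Nat.eq_zero_or_pos y' with rfl | h
        · simp at hy1
        · exact h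
      have hx'2 : x' ≤ q := Nat.le_of_mul_le_mul_left (by rw [← hq]; exact hx2) hm0
      have hy'2 : y' ≤ q := Nat.le_of_mul_le_mul_left (by rw [← hq]; exact hy2) hm0
      rw [mod_inj hx'1 hx'2 hy'1 hy'2 h5]
    · have hy0 : ¬ y % m = 0 := by omega
      rw [F_ndvd hx1 hx2 hx0, F_ndvd hy1 hy2 hy0] at hxy
      have h1 : (x + b) % n = (y + b) % n := psi_eq_iff.mp hxy
      have h2 : x ≡ y [MOD n] := Nat.ModEq.add_right_cancel' b h1
      exact mod_inj hx1 hx2 hy1 hy2 h2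
  have hbij : Set.BijOn (F n m a₀ b₀ b) (Set.Icc 1 n) (Set.Icc 1 n) :=
    ((Set.finite_Icc 1 n).injOn_iff_bijOn_of_mapsTo hmaps).mp hinj
  set cv : Fin m → ℕ := fun i => psi m (1 + i.val * b) with hcv
  have hcvmem : ∀ i, cv i ∈ Set.Icc 1 m := fun i => psi_mem hm0 _
  have hcvinj : Function.Injective cv := by
    intro i j hij
    have h1 : (1 + i.val * b) % m = (1 + j.val * b) % m := psi_eq_iff.mp hij
    have h2 : i.val * b ≡ j.val * b [MOD m] := Nat.ModEq.add_left_cancel' 1 h1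
    have h3 : (i.val : ℕ) ≡ j.val [MOD m] := Nat.ModEq.cancel_right_of_coprime hbc h2
    exact Fin.ext (by rwa [Nat.ModEq, Nat.mod_eq_of_lt i.isLt, Nat.mod_eq_of_lt j.isLt] at h3)
  have hqn : q ≤ n := by rw [hq]; exact Nat.le_mul_of_pos_left q hm0
  refine ⟨⟨fun i => if cv i = m then a₀ else 1, fun i => if cv i = m then b₀ else b, cv,
    hbij, ?_, ?_, ?_, hcvmem, hcvinj, ?_⟩, ?_⟩
  · intro x hx
    exact F_out (by simpa [Set.mem_Icc] using hx)
  · intro i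
    dsimp only
    split
    · exact ⟨ha₀1, le_trans ha₀2 hqn⟩
    · exact ⟨le_refl 1, hn0⟩
  · intro i
    dsimp only
    split
    · exact ⟨hb₀1, hb₀2⟩
    · exact ⟨hb1, hb2⟩
  · intro x hx i hpsix
    obtain ⟨hx1, hx2⟩ := hx
    have hiff : x % m = 0 ↔ cv i = m := by
      rw [← hpsix, psi_eq_top_iff hm0]
    have hx_mod : x % m = (1 + i.val * b) % m := by
      have := congrArg (· % m) hpsix
      simpa [hcv, psi_mod] using this
    have hFmod : F n m a₀ b₀ b x % m = (x + b) % m := hres x hx1 hx2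
    dsimp only
    constructor
    · by_cases hx0 : x % m = 0
      · rw [if_pos (hiff.mp hx0), if_pos (hiff.mp hx0), F_dvd hx1 hx2 hx0]
      · rw [if_neg (fun h => hx0 (hiff.mpr h)), if_neg (fun h => hx0 (hiff.mpr h)),
          F_ndvd hx1 hx2 hx0, one_mul]
    · have hval : ((i + 1 : Fin m)).val ≡ i.val + 1 [MOD m] := by
        rw [Fin.val_add, Fin.val_one']
        calc (i.val + 1 % m) % m ≡ i.val + 1 % m [MOD m] := Nat.mod_modEq _ _
          _ ≡ i.val + 1 [MOD m] := Nat.ModEq.add_left _ (Nat.mod_modEq 1 m)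
      show psi m (F n m a₀ b₀ b x) = psi m (1 + ((i + 1 : Fin m)).val * b)
      apply psi_eq_iff.mpr
      rw [hFmod]
      calc (x + b) % m = (1 + i.val * b + b) % m := by
            rw [Nat.add_mod, hx_mod, ← Nat.add_mod]
        _ = (1 + (i.val + 1) * b) % m := by
            rw [show 1 + i.val * b + b = 1 + (i.val + 1) * b from by ring]
        _ = (1 + ((i + 1 : Fin m)).val * b) % m :=
            (Nat.ModEq.add_left 1 (Nat.ModEq.mul_right b hval)).symm
  · intro x hx
    obtain ⟨hx1, hx2⟩ := hx
    constructor
    · intro hdvd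
      exact F_dvd hx1 hx2 (Nat.mod_eq_zero_of_dvd hdvd)
    · intro hndvd
      rw [F_ndvd hx1 hx2 (fun h => hndvd (Nat.dvd_of_mod_eq_zero h)), one_mul]

/-- The number of distinct 2-reducible `(n,m)`-p.a.p.'s of `[1,n]` is at least
`φ(n/m)·φ(m)·n²/m²`. -/
theorem pap2_count_lower (n m : ℕ) [NeZero m] (hm : 2 < m) (hmn : m ∣ n) :
    Nat.totient (n / m) * Nat.totient m * (n / m) ^ 2 ≤
      Set.ncard {π : ℕ → ℕ | ∃ a₀ a b₀ b : ℕ,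
        a₀ ∈ Set.Icc 1 n ∧ a ∈ Set.Icc 1 n ∧ b₀ ∈ Set.Icc 1 n ∧ b ∈ Set.Icc 1 n ∧
        IsPAP2 n m a₀ a b₀ b π} := by
  have hm0 : 0 < m := by omega
  rcases Nat.eq_zero_or_pos n with rfl | hn0
  · simp
  set q := n / m with hqdef
  have hq : n = m * q := (Nat.mul_div_cancel' hmn).symm
  have hq1 : 1 ≤ q := by
    rcases Nat.eq_zero_or_pos q with h0 | h
    · rw [h0, mul_zero] at hq; omega
    · exact h
  have hn1 : 1 ≤ n := hn0
  set S := {π : ℕ → ℕ | ∃ a₀ a b₀ b : ℕ,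
      a₀ ∈ Set.Icc 1 n ∧ a ∈ Set.Icc 1 n ∧ b₀ ∈ Set.Icc 1 n ∧ b ∈ Set.Icc 1 n ∧
      IsPAP2 n m a₀ a b₀ b π} with hS
  -- S is finite
  have hbd : ∀ ρ : ℕ → ℕ, ρ ∈ S → ∀ x, x ≤ n → ρ x ≤ n := by
    intro ρ hρ x hx
    obtain ⟨a₀, a, b₀, b, _, _, _, _, ⟨av, bv, cv, hbij, hout, _⟩, _⟩ := hρ
    by_cases h1 : 1 ≤ x
    · exact (hbij.mapsTo ⟨h1, hx⟩).2
    · rw [hout x (fun hc => absurd hc.1 (by omega))]; exact hx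
  have hid : ∀ ρ : ℕ → ℕ, ρ ∈ S → ∀ x, n < x → ρ x = x := by
    intro ρ hρ x hx
    obtain ⟨a₀, a, b₀, b, _, _, _, _, ⟨av, bv, cv, hbij, hout, _⟩, _⟩ := hρ
    exact hout x (fun hc => absurd hc.2 (by omega))
  have hSfin : S.Finite := by
    apply Set.Finite.of_finite_image
      (f := fun (ρ : ℕ → ℕ) => fun (x : Fin (n+1)) => ((ρ x.val : ZMod (n+1))))
    · exact Set.toFinite _
    · intro ρ hρ ρ' hρ' h
      funext x
      by_cases hx : x ≤ n
      · have h1 := congrFun h ⟨x, by omega⟩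
        have h2 : ρ x % (n+1) = ρ' x % (n+1) :=
          (ZMod.natCast_eq_natCast_iff' _ _ _).mp h1
        rwa [Nat.mod_eq_of_lt (by have := hbd ρ hρ x hx; omega),
          Nat.mod_eq_of_lt (by have := hbd ρ' hρ' x hx; omega)] at h2
      · rw [hid ρ hρ x (by omega), hid ρ' hρ' x (by omega)]
  -- the index finset and parametrization
  set I : Finset (ℕ × ℕ × ℕ × ℕ) :=
    ((Finset.range q).filter q.Coprime) ×ˢ
      (((Finset.range m).filter m.Coprime) ×ˢ ((Finset.range q) ×ˢ (Finset.range q))) with hI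
  set G : ℕ × ℕ × ℕ × ℕ → (ℕ → ℕ) := fun p =>
    F n m (psi q p.1) (p.2.1 + m * p.2.2.2) (p.2.1 + m * p.2.2.1) with hG
  have hmemI : ∀ u v s t : ℕ, (u, v, s, t) ∈ I ↔
      (u < q ∧ Nat.Coprime q u) ∧ (v < m ∧ Nat.Coprime m v) ∧
      s < q ∧ t < q := by
    intro u v s t
    simp [hI, Finset.mem_product, and_assoc]
  -- basic bounds for parameters
  have hbfact : ∀ v s : ℕ, v < m → Nat.Coprime m v → s < q →
      1 ≤ v + m * s ∧ v + m * s + 1 ≤ n ∧ Nat.Coprime m (v + m * s) ∧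
      (v + m * s) % m = v := by
    intro v s hv hvc hs
    have hv1 : 1 ≤ v := by
      rcases Nat.eq_zero_or_pos v with rfl | h
      · rw [Nat.coprime_zero_right] at hvc; omega
      · exact h
    have hms : m * (s + 1) ≤ m * q := Nat.mul_le_mul_left m (by omega)
    have hms' : m * (s + 1) = m * s + m := by ring
    refine ⟨by omega, by omega, ?_, ?_⟩
    · exact (Nat.coprime_add_mul_left_right m v s).mpr hvc
    · rw [Nat.add_mul_mod_self_left, Nat.mod_eq_of_lt hv]
  have hafact : ∀ u : ℕ, u < q → Nat.Coprime q u →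
      1 ≤ psi q u ∧ psi q u ≤ q ∧ Nat.Coprime q (psi q u) := by
    intro u hu huc
    obtain ⟨h1, h2⟩ := psi_mem hq1 u
    refine ⟨h1, h2, ?_⟩
    have h3 : Nat.gcd q (psi q u) = Nat.gcd q u := by
      rw [Nat.gcd_rec q (psi q u), psi_mod, ← Nat.gcd_rec q u]
    unfold Nat.Coprime at *
    rw [h3]; exact huc
  -- image is inside S
  have himg : G '' ↑I ⊆ S := by
    rintro π ⟨⟨u, v, s, t⟩, hp, rfl⟩
    obtain ⟨⟨hu, huc⟩, ⟨hv, hvc⟩, hs, ht⟩ := (hmemI u v s t).mp hp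
    obtain ⟨ha1, ha2, hac⟩ := hafact u hu huc
    obtain ⟨hb1, hb2, hbc, _⟩ := hbfact v s hv hvc hs
    obtain ⟨hb₀1, hb₀2, _, hb₀m⟩ := hbfact v t hv hvc ht
    obtain ⟨_, _, _, hbm⟩ := hbfact v s hv hvc hs
    have hqn : q ≤ n := by rw [hq]; exact Nat.le_mul_of_pos_left q hm0
    refine ⟨psi q u, 1, v + m * t, v + m * s,
      Set.mem_Icc.mpr ⟨ha1, le_trans ha2 hqn⟩, Set.mem_Icc.mpr ⟨le_refl 1, hn1⟩,
      Set.mem_Icc.mpr ⟨hb₀1, by omega⟩, Set.mem_Icc.mpr ⟨hb1, by omega⟩, ?_⟩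
    exact key hm hq hq1 ha1 ha2 hac hb1 (by omega) hbc hb₀1 (by omega) (by rw [hb₀m, hbm])
  -- injectivity of the parametrization
  have hGinj : Set.InjOn G ↑I := by
    rintro ⟨u, v, s, t⟩ hp ⟨u', v', s', t'⟩ hp' hfe
    obtain ⟨⟨hu, huc⟩, ⟨hv, hvc⟩, hs, ht⟩ := (hmemI u v s t).mp (by exact_mod_cast hp)
    obtain ⟨⟨hu', huc'⟩, ⟨hv', hvc'⟩, hs', ht'⟩ := (hmemI u' v' s' t').mp (by exact_mod_cast hp')
    obtain ⟨ha1, ha2, hac⟩ := hafact u hu huc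
    obtain ⟨ha1', ha2', hac'⟩ := hafact u' hu' huc'
    obtain ⟨hb1, hb2, hbc, hbm⟩ := hbfact v s hv hvc hs
    obtain ⟨hb1', hb2', hbc', hbm'⟩ := hbfact v' s' hv' hvc' hs'
    simp only [hG] at hfe
    -- evaluate at 1 to recover v and s
    have e1 := congrFun hfe 1
    have h1m : ¬ (1 % m = 0) := by
      rw [Nat.mod_eq_of_lt (by omega)]; omega
    rw [F_ndvd le_rfl hn1 h1m, F_ndvd le_rfl hn1 h1m,
      psi_eq_self (by omega) (by omega), psi_eq_self (by omega) (by omega)] at e1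
    have hbb : v + m * s = v' + m * s' := by omega
    have hv_eq : v = v' := by
      have h := congrArg (· % m) hbb
      simpa [Nat.add_mul_mod_self_left, Nat.mod_eq_of_lt hv, Nat.mod_eq_of_lt hv'] using h
    have hs_eq : s = s' := Nat.eq_of_mul_eq_mul_left hm0 (by omega)
    -- recover u and t
    rcases eq_or_lt_of_le hq1 with hq1' | hq2
    · have hu_eq : u = u' := by omega
      have ht_eq : t = t' := by omega
      simp [Prod.ext_iff, hu_eq, hv_eq, hs_eq, ht_eq]
    · have key2 : ∀ j : ℕ, 1 ≤ j → j ≤ q →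
          psi q u * j + t ≡ psi q u' * j + t' [MOD q] := by
        intro j hj1 hj2
        have e := congrFun hfe (m * j)
        have hmj1 : 1 ≤ m * j := by
          calc 1 ≤ 1 * 1 := le_rfl
            _ ≤ m * j := Nat.mul_le_mul (by omega) hj1
        have hmj2 : m * j ≤ n := by rw [hq]; exact Nat.mul_le_mul_left m hj2
        have hmj0 : (m * j) % m = 0 := Nat.mul_mod_right m j
        rw [F_dvd hmj1 hmj2 hmj0, F_dvd hmj1 hmj2 hmj0] at e
        have h1 : (psi q u * (m * j) + (v + m * t)) % n
            = (psi q u' * (m * j) + (v' + m * t')) % n := psi_eq_iff.mp e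
        rw [show psi q u * (m * j) + (v + m * t) = v + m * (psi q u * j + t) from by ring,
          show psi q u' * (m * j) + (v' + m * t') = v' + m * (psi q u' * j + t') from by ring,
          ← hv_eq] at h1
        have h2 : m * (psi q u * j + t) ≡ m * (psi q u' * j + t') [MOD n] :=
          Nat.ModEq.add_left_cancel' v h1
        rw [hq] at h2
        exact Nat.ModEq.mul_left_cancel' (by omega) h2
      have k1 := key2 1 le_rfl hq1
      have k2 := key2 2 (by omega) hq2
      have z1 : (psi q u : ZMod q) + t = (psi q u' : ZMod q) + t' := by
        have h := (ZMod.natCast_eq_natCast_iff _ _ _).mpr k1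
        push_cast at h
        simpa using h
      have z2 : 2 * (psi q u : ZMod q) + t = 2 * (psi q u' : ZMod q) + t' := by
        have h := (ZMod.natCast_eq_natCast_iff _ _ _).mpr k2
        push_cast at h
        calc 2 * (psi q u : ZMod q) + t = (psi q u : ZMod q) * 2 + t := by ring
          _ = (psi q u' : ZMod q) * 2 + t' := h
          _ = 2 * (psi q u' : ZMod q) + t' := by ring
      have zu : (psi q u : ZMod q) = (psi q u' : ZMod q) := by
        linear_combination z2 - z1
      have zt : (t : ZMod q) = (t' : ZMod q) := by
        linear_combination z1 - zu
      have lcast : ∀ w : ℕ, ((psi q w : ℕ) : ZMod q) = (w : ZMod q) := fun w =>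
        (ZMod.natCast_eq_natCast_iff' _ _ _).mpr (psi_mod q w)
      have hu_eq : u = u' := by
        have h : (u : ZMod q) = (u' : ZMod q) := by rw [← lcast u, ← lcast u', zu]
        have h2 := (ZMod.natCast_eq_natCast_iff' u u' q).mp h
        rwa [Nat.mod_eq_of_lt hu, Nat.mod_eq_of_lt hu'] at h2
      have ht_eq : t = t' := by
        have h2 := (ZMod.natCast_eq_natCast_iff' t t' q).mp zt
        rwa [Nat.mod_eq_of_lt ht, Nat.mod_eq_of_lt ht'] at h2
      simp [Prod.ext_iff, hu_eq, hv_eq, hs_eq, ht_eq]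
  -- conclude by counting
  have hcard : (G '' ↑I).ncard = I.card := by
    rw [Set.ncard_image_of_injOn hGinj, Set.ncard_coe_finset]
  have hle : I.card ≤ S.ncard := by
    rw [← hcard]
    exact Set.ncard_le_ncard himg hSfin
  have hIcard : I.card = Nat.totient q * (Nat.totient m * (q * q)) := by
    simp [hI, Nat.totient_eq_card_coprime]
  calc Nat.totient q * Nat.totient m * q ^ 2
      = Nat.totient q * (Nat.totient m * (q * q)) := by ring
    _ = I.card := hIcard.symm
    _ ≤ S.ncard := hle
end

section
/- Let π be an (n,m)-piecewise affine permutation with principal product P ≠ 1 and principal sum S. For x ∈ [1,n] divisible by m, the length of the cycle of π containing x equals m·ord_{κ(x)}(P), where κ(x) = n(P−1)/gcd(n(P−1), x(P−1) + S) and ord_k(P) denotes the multiplicative order of P modulo k. -/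
/-!
Because `π` carries the residue class `c_i` of `Ψ_m` to `c_{i+1}` and `c` is injective, `m`
divides `π^[j] x` exactly when `m ∣ j`. Hence the cycle length of `x` is `m` times the period of
`x` under `π^[m]`, which acts on multiples of `m` as the affine map `y ↦ P y + S` modulo `n`.
Its `k`-th iterate fixes `x` iff `n ∣ (P^k - 1) x + S (1 + P + ⋯ + P^{k-1})`; multiplying by
`P - 1`, iff `n (P - 1) ∣ (P^k - 1) (x (P - 1) + S)`, i.e. iff `κ(x) ∣ P^k - 1`.
-/

theorem psi_modEq (k x : ℕ) : psi k x ≡ x [MOD k] := by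
  unfold psi
  split_ifs with h
  · rw [Nat.ModEq, Nat.mod_self, h]
  · exact Nat.mod_modEq x k

theorem psi_eq_self_iff_dvd {k x : ℕ} (hk : 0 < k) : psi k x = k ↔ k ∣ x := by
  unfold psi
  split_ifs with h
  · simp [Nat.dvd_of_mod_eq_zero h]
  · exact iff_of_false (Nat.mod_lt x hk).ne (mt Nat.mod_eq_zero_of_dvd h)

theorem Nat.ModEq.eq_of_mem_Icc {n a b : ℕ} (h : a ≡ b [MOD n]) (ha : a ∈ Set.Icc 1 n)
    (hb : b ∈ Set.Icc 1 n) : a = b :=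
  h.eq_of_abs_lt <| by
    obtain ⟨ha₁, ha₂⟩ := ha
    obtain ⟨hb₁, hb₂⟩ := hb
    rw [abs_lt]
    omega

theorem Int.natCast_dvd_mul_iff_div_gcd_dvd {N t : ℕ} (h : 0 < N.gcd t) (a : ℤ) :
    (N : ℤ) ∣ a * t ↔ ((N / N.gcd t : ℕ) : ℤ) ∣ a := by
  have hcop := Nat.coprime_div_gcd_div_gcd h
  obtain ⟨hgN, hgt⟩ : N.gcd t ∣ N ∧ N.gcd t ∣ t := ⟨Nat.gcd_dvd_left N t, Nat.gcd_dvd_right N t⟩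
  generalize N.gcd t = g at *
  obtain ⟨K, rfl⟩ := hgN
  obtain ⟨u, rfl⟩ := hgt
  rw [Nat.mul_div_cancel_left _ h, Nat.mul_div_cancel_left _ h, ← Nat.isCoprime_iff_coprime]
    at hcop
  rw [Nat.mul_div_cancel_left _ h, Nat.cast_mul, Nat.cast_mul, mul_left_comm,
    mul_dvd_mul_iff_left (by exact_mod_cast h.ne')]
  exact ⟨hcop.dvd_of_dvd_mul_right, fun hKa => hKa.mul_right _⟩

theorem affine_iterate_sub_mul {R : Type*} [CommRing R] (P x S : R) (k : ℕ) :
    (P ^ k * x + S * ∑ i ∈ Finset.range k, P ^ i - x) * (P - 1) =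
      (P ^ k - 1) * (x * (P - 1) + S) := by
  linear_combination S * geom_sum_mul P k

theorem modEq_affine_iterate_iff {n P S x : ℕ} (hn : 0 < n) (hP : 1 < P) (k : ℕ) :
    P ^ k * x + S * ∑ i ∈ Finset.range k, P ^ i ≡ x [MOD n] ↔
      (P : ZMod (n * (P - 1) / Nat.gcd (n * (P - 1)) (x * (P - 1) + S))) ^ k = 1 := by
  have hgcd : 0 < Nat.gcd (n * (P - 1)) (x * (P - 1) + S) :=
    Nat.gcd_pos_of_pos_left _ (Nat.mul_pos hn (by omega))
  rw [← sub_eq_zero, ← Int.cast_natCast, ← Int.cast_pow, ← Int.cast_one, ← Int.cast_sub,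
    ZMod.intCast_zmod_eq_zero_iff_dvd, ← Int.natCast_dvd_mul_iff_div_gcd_dvd hgcd,
    Nat.modEq_iff_dvd, dvd_sub_comm]
  push_cast [hP.le]
  rw [← affine_iterate_sub_mul, mul_dvd_mul_iff_right (by omega)]

section Dynamics

open Function

variable {α : Type*} {f : α → α} {x : α}

theorem Function.minimalPeriod_eq_orderOf {G : Type*} [Monoid G] {g : G}
    (h : ∀ k, IsPeriodicPt f k x ↔ g ^ k = 1) : minimalPeriod f x = orderOf g :=
  minimalPeriod_eq_minimalPeriod_iff.2 fun k => (h k).trans (isPeriodicPt_mul_iff_pow_eq_one g).symm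

theorem Function.minimalPeriod_eq_mul_minimalPeriod_iterate {m : ℕ} (hm : 0 < m)
    (h : m ∣ minimalPeriod f x) : minimalPeriod f x = m * minimalPeriod f^[m] x := by
  rw [minimalPeriod_iterate_eq_div_gcd hm.ne', Nat.gcd_eq_right h, Nat.mul_div_cancel' h]

end Dynamics

namespace IsPAP

open Function

variable {n m : ℕ} [NeZero m] {a b c : Fin m → ℕ} {π : ℕ → ℕ}

theorem mapsTo (h : IsPAP n m a b c π) : Set.MapsTo π (Set.Icc 1 n) (Set.Icc 1 n) :=
  h.1.mapsTo

theorem one_le_prod (h : IsPAP n m a b c π) : 1 ≤ ∏ i, a i :=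
  Finset.one_le_prod' fun i _ => (h.2.2.1 i).1

theorem exists_c_eq (h : IsPAP n m a b c π) {y : ℕ} (hy : y ∈ Set.Icc 1 m) : ∃ i, c i = y := by
  obtain ⟨-, -, -, -, hc_mem, hc_inj, -⟩ := h
  let c' : Fin m → Set.Icc 1 m := fun i => ⟨c i, hc_mem i⟩
  have hc' : Injective c' := fun i j hij => hc_inj (congrArg Subtype.val hij)
  obtain ⟨i, hi⟩ := ((Fintype.bijective_iff_injective_and_card c').2 ⟨hc', by simp⟩).2 ⟨y, hy⟩
  exact ⟨i, congrArg Subtype.val hi⟩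

open Fin.NatCast in
theorem psi_iterate (h : IsPAP n m a b c π) {y : ℕ} (hy : y ∈ Set.Icc 1 n) {i : Fin m}
    (hi : psi m y = c i) (j : ℕ) : psi m (π^[j] y) = c (i + j) := by
  induction j with
  | zero => simpa using hi
  | succ j ih =>
    have hmem := h.mapsTo.iterate j hy
    obtain ⟨-, -, -, -, -, -, hstep⟩ := h
    rw [iterate_succ_apply', (hstep _ hmem _ ih).2, Nat.cast_succ, add_assoc]

theorem dvd_iterate_iff (h : IsPAP n m a b c π) {y : ℕ} (hy : y ∈ Set.Icc 1 n) (hmy : m ∣ y)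
    (j : ℕ) : m ∣ π^[j] y ↔ m ∣ j := by
  have hm := NeZero.pos m
  obtain ⟨i, hi⟩ := h.exists_c_eq ⟨hm, le_rfl⟩
  have hiy : psi m y = c i := by rw [hi, psi_eq_self_iff_dvd hm]; exact hmy
  rw [← psi_eq_self_iff_dvd hm, h.psi_iterate hy hiy]
  obtain ⟨-, -, -, -, -, hc_inj, -⟩ := h
  rw [hc_inj.eq_iff' hi, add_eq_left, Fin.natCast_eq_zero]

variable {P S : ℕ}

theorem iterate_mul_modEq (h : IsPAP n m a b c π)
    (hS : ∀ y ∈ Set.Icc 1 n, m ∣ y → π^[m] y = psi n (P * y + S)) {x : ℕ}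
    (hx : x ∈ Set.Icc 1 n) (hmx : m ∣ x) (k : ℕ) :
    π^[m * k] x ≡ P ^ k * x + S * ∑ i ∈ Finset.range k, P ^ i [MOD n] := by
  induction k with
  | zero => simp [Nat.ModEq.refl]
  | succ k ih =>
    have hmem := h.mapsTo.iterate (m * k) hx
    have hdvd := (h.dvd_iterate_iff hx hmx _).2 (dvd_mul_right m k)
    rw [mul_add_one, add_comm, iterate_add_apply, hS _ hmem hdvd]
    calc psi n (P * π^[m * k] x + S) ≡ P * π^[m * k] x + S [MOD n] := psi_modEq _ _
      _ ≡ P * (P ^ k * x + S * ∑ i ∈ Finset.range k, P ^ i) + S [MOD n] :=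
        (ih.mul_left P).add_right S
      _ = P ^ (k + 1) * x + S * ∑ i ∈ Finset.range (k + 1), P ^ i := by
        rw [geom_sum_succ]; ring

theorem isPeriodicPt_iterate_iff (h : IsPAP n m a b c π)
    (hS : ∀ y ∈ Set.Icc 1 n, m ∣ y → π^[m] y = psi n (P * y + S)) (hP : 1 < P) {x : ℕ}
    (hx : x ∈ Set.Icc 1 n) (hmx : m ∣ x) (k : ℕ) :
    IsPeriodicPt π^[m] k x ↔
      (P : ZMod (n * (P - 1) / Nat.gcd (n * (P - 1)) (x * (P - 1) + S))) ^ k = 1 := by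
  have hk := h.iterate_mul_modEq hS hx hmx k
  rw [IsPeriodicPt, IsFixedPt, ← iterate_mul, ← modEq_affine_iterate_iff (hx.1.trans hx.2) hP]
  exact ⟨fun he => (he ▸ hk).symm,
    fun hA => (hk.trans hA).eq_of_mem_Icc (h.mapsTo.iterate _ hx) hx⟩

end IsPAP

theorem pap_cycle_length_general (n m : ℕ) [NeZero m]
    (a b c : Fin m → ℕ) (π : ℕ → ℕ) (hpap : IsPAP n m a b c π)
    (P S : ℕ) (hP : P = ∏ i, a i)
    (hS : ∀ x ∈ Set.Icc 1 n, m ∣ x → π^[m] x = psi n (P * x + S))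
    (hP1 : P ≠ 1) :
    ∀ x ∈ Set.Icc 1 n, m ∣ x →
      Function.minimalPeriod π x =
        m * orderOf
          ((P : ZMod (n * (P - 1) / Nat.gcd (n * (P - 1)) (x * (P - 1) + S)))) := by
  intro x hx hmx
  have hP_gt : 1 < P := lt_of_le_of_ne (hP ▸ hpap.one_le_prod) hP1.symm
  have hm_dvd : m ∣ Function.minimalPeriod π x := by
    rw [← hpap.dvd_iterate_iff hx hmx, Function.iterate_minimalPeriod]
    exact hmx
  rw [Function.minimalPeriod_eq_mul_minimalPeriod_iterate (NeZero.pos m) hm_dvd,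
    Function.minimalPeriod_eq_orderOf (hpap.isPeriodicPt_iterate_iff hS hP_gt hx hmx)]

/-- If the principal product satisfies `P ≠ 1`, the cycle of `π` containing a
multiple `x` of `m` has length `m·ord_{κ(x)}(P)`, where
`κ(x) = n(P-1)/gcd(n(P-1), x(P-1)+S)`. -/
theorem pap_cycle_length (n m : ℕ) [NeZero m] (hm : 1 < m) (hmn : m ∣ n)
    (a b c : Fin m → ℕ) (π : ℕ → ℕ) (hpap : IsPAP n m a b c π)
    (P S : ℕ) (hP : P = ∏ i, a i) (hSmem : S ∈ Set.Icc 1 n)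
    (hS : ∀ x ∈ Set.Icc 1 n, m ∣ x → π^[m] x = psi n (P * x + S))
    (hP1 : P ≠ 1) :
    ∀ x ∈ Set.Icc 1 n, m ∣ x →
      Function.minimalPeriod π x =
        m * orderOf
          ((P : ZMod (n * (P - 1) / Nat.gcd (n * (P - 1)) (x * (P - 1) + S)))) :=
  pap_cycle_length_general n m a b c π hpap P S hP hS hP1
end
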